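/- arXiv:2202.10009 — 2 statements merged into one kernel-verified Lean document; each statement's English description precedes it below -/
import Mathlib

section
/- Assume that a variety V has a weak difference term. If an algebra A in V has congruences α, θ, δ satisfying α ≥ θ ≥ δ and [α,θ] = 0, then C(θ,α;δ) holds. -/
/-- A (universal-algebraic) signature: a type of operation symbols with arities. -/
structure Sig where
  ops : Type
  arity : ops → ℕ

/-- An algebra for a signature: a carrier set with an interpretation of each
operation symbol. -/
structure Alg (σ : Sig) where
  carrier : Type
  interp : ∀ f : σ.ops, (Fin (σ.arity f) → carrier) → carrier

/-- Terms over a signature with variables from `V`. -/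
inductive Trm (σ : Sig) (V : Type) : Type
  | var : V → Trm σ V
  | op : (f : σ.ops) → (Fin (σ.arity f) → Trm σ V) → Trm σ V

/-- Evaluation of a term in an algebra under an assignment of the variables. -/
def Alg.evalTrm {σ : Sig} (A : Alg σ) {V : Type} (asg : V → A.carrier) :
    Trm σ V → A.carrier
  | .var v => asg v
  | .op f ts => A.interp f fun i => A.evalTrm asg (ts i)

/-- A congruence on an algebra: an equivalence relation compatible with the
basic operations. -/
structure Congruence {σ : Sig} (A : Alg σ) where
  rel : A.carrier → A.carrier → Prop
  iseqv : Equivalence rel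
  compat : ∀ (f : σ.ops) (a b : Fin (σ.arity f) → A.carrier),
    (∀ i, rel (a i) (b i)) → rel (A.interp f a) (A.interp f b)

namespace Congruence

variable {σ : Sig} {A : Alg σ}

theorem ext' {c d : Congruence A} (h : c.rel = d.rel) : c = d := by
  cases c; cases d; cases h; rfl

instance : PartialOrder (Congruence A) where
  le c d := ∀ a b, c.rel a b → d.rel a b
  le_refl c a b h := h
  le_trans c d e h1 h2 a b h := h2 a b (h1 a b h)
  le_antisymm c d h1 h2 :=
    ext' (funext fun a => funext fun b => propext ⟨h1 a b, h2 a b⟩)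

instance : InfSet (Congruence A) where
  sInf S :=
    { rel := fun a b => ∀ c ∈ S, c.rel a b
      iseqv := ⟨fun a c _ => c.iseqv.refl a,
                fun h c hc => c.iseqv.symm (h c hc),
                fun h1 h2 c hc => c.iseqv.trans (h1 c hc) (h2 c hc)⟩
      compat := fun f a b h c hc => c.compat f a b fun i => h i c hc }

/-- The congruences of an algebra form a complete lattice (`⊥` is the equality
congruence, `⊤` is the total congruence, meet is intersection). -/
instance : CompleteLattice (Congruence A) :=
  completeLatticeOfInf _ fun S =>
    ⟨fun c hc a b h => h c hc, fun c hc a b h d hd => hc hd a b h⟩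

end Congruence

/-- `Centralizes S T δ` is the centralizer relation `C(S,T;δ)`: for every
`S,T`-matrix `[[p,q],[r,s]]` (built from a term operation `t`, tuples `a S b`
and `u T v`), if `(p,q) ∈ δ` then `(r,s) ∈ δ`. -/
def Centralizes {σ : Sig} {A : Alg σ} (S T δ : Congruence A) : Prop :=
  ∀ (m n : ℕ) (t : Trm σ (Sum (Fin m) (Fin n)))
    (a b : Fin m → A.carrier) (u v : Fin n → A.carrier),
    (∀ i, S.rel (a i) (b i)) → (∀ j, T.rel (u j) (v j)) →
    δ.rel (A.evalTrm (Sum.elim a u) t) (A.evalTrm (Sum.elim a v) t) →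
    δ.rel (A.evalTrm (Sum.elim b u) t) (A.evalTrm (Sum.elim b v) t)

/-- The commC `[S,T]`: the least congruence `δ` with `C(S,T;δ)`. -/
def commC {σ : Sig} {A : Alg σ} (S T : Congruence A) : Congruence A :=
  sInf {δ | Centralizes S T δ}

/-- The relative commC `[S,T]_ε`: the intersection of all congruences
`γ ≥ ε` with `C(S,T;γ)`. -/
def relCommC {σ : Sig} {A : Alg σ} (S T ε : Congruence A) : Congruence A :=
  sInf {γ | ε ≤ γ ∧ Centralizes S T γ}

/-- The congruence generated by a single pair `(x, y)`. -/
def cgPair {σ : Sig} (A : Alg σ) (x y : A.carrier) : Congruence A :=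
  sInf {c | c.rel x y}

/-- Homomorphisms of algebras. -/
structure UAHom {σ : Sig} (A B : Alg σ) where
  toFun : A.carrier → B.carrier
  map_op : ∀ (f : σ.ops) (a : Fin (σ.arity f) → A.carrier),
    toFun (A.interp f a) = B.interp f (fun i => toFun (a i))

/-- The product of a family of algebras. -/
def prodAlg {σ : Sig} {I : Type} (F : I → Alg σ) : Alg σ where
  carrier := ∀ i, (F i).carrier
  interp f a := fun i => (F i).interp f (fun j => a j i)

/-- A variety: a class of algebras of a fixed signature closed under
homomorphic images, subalgebras (here: isomorphic copies of subalgebras,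
i.e. sources of injective homomorphisms), and arbitrary products. -/
structure Variety (σ : Sig) where
  Mem : Alg σ → Prop
  closed_hom : ∀ {A B : Alg σ}, Mem A →
    (∃ h : UAHom A B, Function.Surjective h.toFun) → Mem B
  closed_sub : ∀ {A B : Alg σ}, Mem A →
    (∃ h : UAHom B A, Function.Injective h.toFun) → Mem B
  closed_prod : ∀ {I : Type} (F : I → Alg σ), (∀ i, Mem (F i)) → Mem (prodAlg F)

/-- The setoid associated with a congruence. -/
def Congruence.setoid {σ : Sig} {A : Alg σ} (c : Congruence A) :
    Setoid A.carrier := ⟨c.rel, c.iseqv⟩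

/-- The quotient algebra of an algebra by a congruence. -/
noncomputable def quotAlg {σ : Sig} (A : Alg σ) (c : Congruence A) : Alg σ where
  carrier := Quotient c.setoid
  interp f a := Quotient.mk c.setoid (A.interp f fun i => (a i).out)

/-- `algOn A α` is the algebra `A(α)`: the subalgebra of `A × A` whose
universe is `α`. -/
def algOn {σ : Sig} (A : Alg σ) (α : Congruence A) : Alg σ where
  carrier := {p : A.carrier × A.carrier // α.rel p.1 p.2}
  interp f a := ⟨(A.interp f fun i => (a i).1.1, A.interp f fun i => (a i).1.2),
    α.compat f _ _ fun i => (a i).2⟩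

/-- The kernel of the first coordinate projection of `A(α)`. -/
def eta1 {σ : Sig} (A : Alg σ) (α : Congruence A) : Congruence (algOn A α) where
  rel p q := p.1.1 = q.1.1
  iseqv := ⟨fun _ => rfl, Eq.symm, Eq.trans⟩
  compat f a b h := congrArg (A.interp f) (funext h)

/-- The kernel of the second coordinate projection of `A(α)`. -/
def eta2 {σ : Sig} (A : Alg σ) (α : Congruence A) : Congruence (algOn A α) where
  rel p q := p.1.2 = q.1.2
  iseqv := ⟨fun _ => rfl, Eq.symm, Eq.trans⟩
  compat f a b h := congrArg (A.interp f) (funext h)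

/-- The congruence `Δ_{α,β}` on `A(α)` generated by the `β`-diagonal pairs. -/
def diagDelta {σ : Sig} (A : Alg σ) (α β : Congruence A) :
    Congruence (algOn A α) :=
  sInf {c | ∀ x z : A.carrier, β.rel x z →
    c.rel ⟨(x, x), α.iseqv.refl x⟩ ⟨(z, z), α.iseqv.refl z⟩}

/-- A pentagon (five-element sublattice isomorphic to `N₅`) in the congruence
lattice with bottom `z`, side element `β`, critical chain `δ < θ`, and top `α`. -/
def IsPentagon {σ : Sig} {A : Alg σ} (z β δ θ α : Congruence A) : Prop :=
  δ < θ ∧ β ⊓ θ = z ∧ β ⊓ δ = z ∧ β ⊔ δ = α ∧ β ⊔ θ = α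

/-- Two congruences permute: `c ∘ d = d ∘ c`. -/
def Permutes {σ : Sig} {A : Alg σ} (c d : Congruence A) : Prop :=
  ∀ a b : A.carrier, (∃ x, c.rel a x ∧ d.rel x b) ↔ (∃ x, d.rel a x ∧ c.rel x b)

/-- `T` is a Taylor term for the variety `V`: an idempotent term satisfying an
`i`-th place Taylor identity for every place `i`. -/
def IsTaylorTrm {σ : Sig} (V : Variety σ) {n : ℕ} (T : Trm σ (Fin n)) : Prop :=
  0 < n ∧
  (∀ A : Alg σ, V.Mem A → ∀ c : A.carrier, A.evalTrm (fun _ => c) T = c) ∧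
  (∀ i : Fin n, ∃ w z : Fin n → Bool, w i ≠ z i ∧
    ∀ A : Alg σ, V.Mem A → ∀ x y : A.carrier,
      A.evalTrm (fun j => cond (w j) x y) T = A.evalTrm (fun j => cond (z j) x y) T)

/-- `V` has a Taylor term. -/
def HasTaylorTrm {σ : Sig} (V : Variety σ) : Prop :=
  ∃ (n : ℕ) (T : Trm σ (Fin n)), IsTaylorTrm V T

/-- A congruence is abelian if `[α,α] = 0`. -/
def IsAbelianCong {σ : Sig} {A : Alg σ} (α : Congruence A) : Prop :=
  commC α α = ⊥

/-- `d` is a weak difference term for `V`: `d(a,a,b) = b` and `d(a,b,b) = a`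
whenever the pair `(a,b)` lies in an abelian congruence of a member of `V`. -/
def IsWeakDifferenceTrm {σ : Sig} (V : Variety σ) (d : Trm σ (Fin 3)) : Prop :=
  ∀ A : Alg σ, V.Mem A → ∀ α : Congruence A, IsAbelianCong α →
    ∀ a b : A.carrier, α.rel a b →
      A.evalTrm ![a, a, b] d = b ∧ A.evalTrm ![a, b, b] d = a

/-- `d` is a difference term for `V`: `V ⊨ d(x,x,y) ≈ y` and `d(a,b,b) = a`
whenever the pair `(a,b)` lies in an abelian congruence of a member of `V`. -/
def IsDifferenceTrm {σ : Sig} (V : Variety σ) (d : Trm σ (Fin 3)) : Prop :=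
  (∀ A : Alg σ, V.Mem A → ∀ a b : A.carrier, A.evalTrm ![a, a, b] d = b) ∧
  (∀ A : Alg σ, V.Mem A → ∀ α : Congruence A, IsAbelianCong α →
    ∀ a b : A.carrier, α.rel a b → A.evalTrm ![a, b, b] d = a)

/-- The commC is left distributive throughout `V`. -/
def CommLeftDistrib {σ : Sig} (V : Variety σ) : Prop :=
  ∀ A : Alg σ, V.Mem A → ∀ x y z : Congruence A,
    commC (x ⊔ y) z = commC x z ⊔ commC y z

/-- The commC is right distributive throughout `V`. -/
def CommRightDistrib {σ : Sig} (V : Variety σ) : Prop :=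
  ∀ A : Alg σ, V.Mem A → ∀ x y z : Congruence A,
    commC x (y ⊔ z) = commC x y ⊔ commC x z

/-- The commC is commutative throughout `V`. -/
def CommutativeCommutator {σ : Sig} (V : Variety σ) : Prop :=
  ∀ A : Alg σ, V.Mem A → ∀ x y : Congruence A, commC x y = commC y x

/-- `V` is congruence modular. -/
def CongruenceModular {σ : Sig} (V : Variety σ) : Prop :=
  ∀ A : Alg σ, V.Mem A → IsModularLattice (Congruence A)


section StableCentralityAux

variable {σ : Sig} {A : Alg σ}

/-- Substitution of terms for variables. -/
def Trm.subst {V W : Type} : Trm σ V → (V → Trm σ W) → Trm σ W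
  | .var x, f => f x
  | .op g ts, f => .op g fun i => (ts i).subst f

theorem Alg.evalTrm_subst {V W : Type} (asg : W → A.carrier) (f : V → Trm σ W)
    (t : Trm σ V) :
    A.evalTrm asg (t.subst f) = A.evalTrm (fun x => A.evalTrm asg (f x)) t := by
  induction t with
  | var x => rfl
  | op g ts ih =>
      simp only [Trm.subst, Alg.evalTrm]
      exact congrArg (A.interp g) (funext fun i => ih i)

theorem evalTrm_rel {V : Type} (c : Congruence A) {asg1 asg2 : V → A.carrier}
    (t : Trm σ V) (h : ∀ x, c.rel (asg1 x) (asg2 x)) :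
    c.rel (A.evalTrm asg1 t) (A.evalTrm asg2 t) := by
  induction t with
  | var x => exact h x
  | op g ts ih => exact c.compat g _ _ fun i => ih i

/-- The equality congruence. -/
def eqCong (A : Alg σ) : Congruence A where
  rel := Eq
  iseqv := eq_equivalence
  compat := fun f a b h => congrArg (A.interp f) (funext h)

theorem bot_rel_iff {x y : A.carrier} : (⊥ : Congruence A).rel x y ↔ x = y :=
  ⟨fun h => (bot_le : (⊥ : Congruence A) ≤ eqCong A) x y h,
   fun h => h ▸ (⊥ : Congruence A).iseqv.refl x⟩

theorem centralizes_commC (S T : Congruence A) : Centralizes S T (commC S T) :=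
  fun m n t a b u v ha hu h c hc => hc m n t a b u v ha hu (h c hc)

theorem rel_append {c : Congruence A} {m n : ℕ} {f f' : Fin m → A.carrier}
    {g g' : Fin n → A.carrier} (hf : ∀ i, c.rel (f i) (f' i))
    (hg : ∀ j, c.rel (g j) (g' j)) :
    ∀ j, c.rel (Fin.append f g j) (Fin.append f' g' j) := fun j =>
  Fin.addCases (motive := fun j => c.rel (Fin.append f g j) (Fin.append f' g' j))
    (fun i => by simpa [Fin.append_left] using hf i)
    (fun i => by simpa [Fin.append_right] using hg i) j

/-- The term `W(x̄; ȳ, ȳ', x̄') = d(t(ȳ, x̄), t(ȳ, x̄'), t(ȳ', x̄'))`. -/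
def Wtrm (m n : ℕ) (d : Trm σ (Fin 3)) (t : Trm σ (Sum (Fin m) (Fin n))) :
    Trm σ (Sum (Fin n) (Fin (m + (m + n)))) :=
  Trm.subst d
    ![t.subst (Sum.elim (fun i => .var (.inr (Fin.castAdd (m + n) i)))
        (fun j => .var (.inl j))),
      t.subst (Sum.elim (fun i => .var (.inr (Fin.castAdd (m + n) i)))
        (fun j => .var (.inr (Fin.natAdd m (Fin.natAdd m j))))),
      t.subst (Sum.elim (fun i => .var (.inr (Fin.natAdd m (Fin.castAdd n i))))
        (fun j => .var (.inr (Fin.natAdd m (Fin.natAdd m j)))))]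

theorem eval_Wtrm (m n : ℕ) (d : Trm σ (Fin 3)) (t : Trm σ (Sum (Fin m) (Fin n)))
    (ROW : Fin n → A.carrier) (c1 c2 : Fin m → A.carrier) (c3 : Fin n → A.carrier) :
    A.evalTrm (Sum.elim ROW (Fin.append c1 (Fin.append c2 c3))) (Wtrm m n d t)
      = A.evalTrm ![A.evalTrm (Sum.elim c1 ROW) t,
                    A.evalTrm (Sum.elim c1 c3) t,
                    A.evalTrm (Sum.elim c2 c3) t] d := by
  have h1 : A.evalTrm (Sum.elim ROW (Fin.append c1 (Fin.append c2 c3)))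
      (t.subst (Sum.elim (fun i => .var (.inr (Fin.castAdd (m + n) i)))
        (fun j => .var (.inl j)))) = A.evalTrm (Sum.elim c1 ROW) t := by
    rw [Alg.evalTrm_subst]
    congr 1
    funext x
    rcases x with i | j <;> simp [Alg.evalTrm, Fin.append_left, Fin.append_right]
  have h2 : A.evalTrm (Sum.elim ROW (Fin.append c1 (Fin.append c2 c3)))
      (t.subst (Sum.elim (fun i => .var (.inr (Fin.castAdd (m + n) i)))
        (fun j => .var (.inr (Fin.natAdd m (Fin.natAdd m j))))))
      = A.evalTrm (Sum.elim c1 c3) t := by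
    rw [Alg.evalTrm_subst]
    congr 1
    funext x
    rcases x with i | j <;> simp [Alg.evalTrm, Fin.append_left, Fin.append_right]
  have h3 : A.evalTrm (Sum.elim ROW (Fin.append c1 (Fin.append c2 c3)))
      (t.subst (Sum.elim (fun i => .var (.inr (Fin.natAdd m (Fin.castAdd n i))))
        (fun j => .var (.inr (Fin.natAdd m (Fin.natAdd m j))))))
      = A.evalTrm (Sum.elim c2 c3) t := by
    rw [Alg.evalTrm_subst]
    congr 1
    funext x
    rcases x with i | j <;> simp [Alg.evalTrm, Fin.append_left, Fin.append_right]
  rw [Wtrm, Alg.evalTrm_subst]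
  congr 1
  funext k
  fin_cases k
  · exact h1
  · exact h2
  · exact h3

/-- The term `K(x; y, y') = d(d(y', y, x), x, y)`. -/
def Ktrm (d : Trm σ (Fin 3)) : Trm σ (Sum (Fin 1) (Fin 2)) :=
  Trm.subst d
    ![Trm.subst d ![.var (.inr 1), .var (.inr 0), .var (.inl 0)],
      .var (.inl 0), .var (.inr 0)]

theorem eval_Ktrm (d : Trm σ (Fin 3)) (X : Fin 1 → A.carrier) (Y : Fin 2 → A.carrier) :
    A.evalTrm (Sum.elim X Y) (Ktrm d)
      = A.evalTrm ![A.evalTrm ![Y 1, Y 0, X 0] d, X 0, Y 0] d := by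
  have h1 : A.evalTrm (Sum.elim X Y)
      (Trm.subst d ![.var (.inr 1), .var (.inr 0), .var (.inl 0)])
      = A.evalTrm ![Y 1, Y 0, X 0] d := by
    rw [Alg.evalTrm_subst]
    congr 1
    funext x
    fin_cases x <;> rfl
  rw [Ktrm, Alg.evalTrm_subst]
  congr 1
  funext k
  fin_cases k
  · exact h1
  · rfl
  · rfl

end StableCentralityAux

/-- If a variety `V` has a weak difference term and `A ∈ V` has congruences
`α ≥ θ ≥ δ` with `[α,θ] = 0`, then `C(θ,α;δ)` holds. -/
theorem stable_centrality {σ : Sig} (V : Variety σ)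
    (hw : ∃ d : Trm σ (Fin 3), IsWeakDifferenceTrm V d)
    (A : Alg σ) (hA : V.Mem A) (α θ δ : Congruence A)
    (h1 : δ ≤ θ) (h2 : θ ≤ α) (h3 : commC α θ = ⊥) :
    Centralizes θ α δ := by
  obtain ⟨d, hd⟩ := hw
  have hαθ : Centralizes α θ (⊥ : Congruence A) := h3 ▸ centralizes_commC α θ
  have hEq : ∀ (m n : ℕ) (t : Trm σ (Sum (Fin m) (Fin n)))
      (a b : Fin m → A.carrier) (u v : Fin n → A.carrier),
      (∀ i, α.rel (a i) (b i)) → (∀ j, θ.rel (u j) (v j)) →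
      A.evalTrm (Sum.elim a u) t = A.evalTrm (Sum.elim a v) t →
      A.evalTrm (Sum.elim b u) t = A.evalTrm (Sum.elim b v) t := by
    intro m n t a b u v ha hu h
    exact bot_rel_iff.1 (hαθ m n t a b u v ha hu (bot_rel_iff.2 h))
  have hθab : IsAbelianCong θ := by
    refine le_antisymm (sInf_le ?_) bot_le
    intro m n t a b u v ha hu h
    exact hαθ m n t a b u v (fun i => h2 _ _ (ha i)) hu h
  have hD := hd A hA θ hθab
  intro m n t a b u v ha hu hpq
  set p := A.evalTrm (Sum.elim a u) t with hp
  set q := A.evalTrm (Sum.elim a v) t with hq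
  set r := A.evalTrm (Sum.elim b u) t with hr
  set s := A.evalTrm (Sum.elim b v) t with hs
  have hrp : θ.rel r p := by
    refine evalTrm_rel θ t fun x => ?_
    rcases x with i | j
    · exact θ.iseqv.symm (ha i)
    · exact θ.iseqv.refl (u j)
  have hsq : θ.rel s q := by
    refine evalTrm_rel θ t fun x => ?_
    rcases x with i | j
    · exact θ.iseqv.symm (ha i)
    · exact θ.iseqv.refl (v j)
  have hpq' : θ.rel p q := h1 _ _ hpq
  have hθrs : θ.rel r s := θ.iseqv.trans hrp (θ.iseqv.trans hpq' (θ.iseqv.symm hsq))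
  have hθps : θ.rel p s := θ.iseqv.trans hpq' (θ.iseqv.symm hsq)
  -- Matrix 1 : p = d(r, s, q)
  have key1 : p = A.evalTrm ![r, s, q] d := by
    have hcols : ∀ j, θ.rel (Fin.append a (Fin.append a v) j)
        (Fin.append b (Fin.append a v) j) :=
      rel_append ha (rel_append (fun i => θ.iseqv.refl (a i))
        (fun j => θ.iseqv.refl (v j)))
    have := hEq n (m + (m + n)) (Wtrm m n d t) v u
      (Fin.append a (Fin.append a v)) (Fin.append b (Fin.append a v))
      (fun j => α.iseqv.symm (hu j)) hcols
    rw [eval_Wtrm, eval_Wtrm, eval_Wtrm, eval_Wtrm] at this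
    have hhyp : A.evalTrm ![A.evalTrm (Sum.elim a v) t, A.evalTrm (Sum.elim a v) t,
        A.evalTrm (Sum.elim a v) t] d
        = A.evalTrm ![A.evalTrm (Sum.elim b v) t, A.evalTrm (Sum.elim b v) t,
        A.evalTrm (Sum.elim a v) t] d := by
      rw [(hD q q (θ.iseqv.refl q)).1, (hD s q hsq).1]
    have hconc := this hhyp
    rw [(hD p q hpq').2] at hconc
    exact hconc
  -- Matrix 2 : r = d(d(r,s,p), p, s)
  have key2 : r = A.evalTrm ![A.evalTrm ![r, s, p] d, p, s] d := by
    have := hEq 1 2 (Ktrm d) (fun _ => s) (fun _ => p) ![r, r] ![s, r]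
      (fun _ => h2 _ _ (θ.iseqv.symm hθps))
      (fun j => by
        fin_cases j
        · exact hθrs
        · exact θ.iseqv.refl r)
    rw [eval_Ktrm, eval_Ktrm, eval_Ktrm, eval_Ktrm] at this
    simp only [Matrix.cons_val_zero, Matrix.cons_val_one, Matrix.head_cons] at this
    have e1 : A.evalTrm ![r, r, s] d = s := (hD r s hθrs).1
    have e2 : A.evalTrm ![s, s, r] d = r := (hD s r (θ.iseqv.symm hθrs)).1
    have e3 : A.evalTrm ![r, s, s] d = r := (hD r s hθrs).2
    have hhyp : A.evalTrm ![A.evalTrm ![r, r, s] d, s, r] d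
        = A.evalTrm ![A.evalTrm ![r, s, s] d, s, s] d := by
      rw [e1, e2, e3, e3]
    have hconc := this hhyp
    rw [(hD r p hrp).1] at hconc
    rw [(hD p r (θ.iseqv.symm hrp)).1] at hconc
    exact hconc
  -- conclusion
  have stepA : δ.rel (A.evalTrm ![r, s, q] d) (A.evalTrm ![r, s, p] d) := by
    refine evalTrm_rel δ d fun x => ?_
    fin_cases x
    · exact δ.iseqv.refl r
    · exact δ.iseqv.refl s
    · exact δ.iseqv.symm hpq
  have stepB := stepA
  rw [← key1] at stepB
  have stepC : δ.rel (A.evalTrm ![p, p, s] d)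
      (A.evalTrm ![A.evalTrm ![r, s, p] d, p, s] d) := by
    refine evalTrm_rel δ d fun x => ?_
    fin_cases x
    · exact stepB
    · exact δ.iseqv.refl p
    · exact δ.iseqv.refl s
  rw [(hD p s hθps).1, ← key2] at stepC
  exact δ.iseqv.symm stepC
end

section
/- If a variety V has a Taylor term, then for any A ∈ V and any congruences α, β ∈ Con(A) the following are equivalent: (a) [β,α] = 0 and [α, α ∩ β] = 0; (b) Δ_{α,β} is disjoint from both coordinate projection kernels of A(α) (i.e., η1 ∩ Δ_{α,β} = 0 and η2 ∩ Δ_{α,β} = 0); (c) [α,β] = 0 and [β, α ∩ β] = 0; (d) Δ_{β,α} is disjoint from both coordinate projection kernels of A(β). In particular, V satisfies the quasi-identity: [β,α] = 0 and [α, α ∩ β] = 0 imply [α,β] = 0. -/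
/-!
(b) ⇒ (c) reads the term condition inside `A(α)`: an `α,β`-matrix (resp. a `β,α∧β`-matrix)
yields a pair in `Δ_{α,β}` whose first (resp. second) coordinates agree.

For (a) ⇒ (b) let `u Δ_{α,β} v` with `u₁ = v₁`. Fill the places of a Taylor term `T` with first
or second coordinates of elements of the `Δ`-class of `u`: by `[β,α] = 0` every Taylor identity
of `T` survives each generating step of `Δ`. Comparing the `i`-th identity at `(u,…,u)` and at
`(u,…,v,…,u)`, and then using `[α,α∧β] = 0`, shows that `T` does not notice an argument
changing from `u₂` to `v₂`; changing the arguments one at a time, idempotence gives `u₂ = v₂`.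
The coordinate swap of `A(α)` handles `η₂`, and (c) ⇒ (d) ⇒ (a) is the same with `α, β`
exchanged.
-/

namespace Congruence

variable {σ : Sig} {A : Alg σ}

theorem rel_bot_iff {a b : A.carrier} : (⊥ : Congruence A).rel a b ↔ a = b := by
  refine ⟨fun h => h ⟨(· = ·), ⟨fun _ => rfl, Eq.symm, Eq.trans⟩,
    fun f _ _ h => congrArg (A.interp f) (funext h)⟩ trivial, ?_⟩
  rintro rfl
  exact (⊥ : Congruence A).iseqv.refl a

theorem eq_bot_iff_rel {c : Congruence A} : c = ⊥ ↔ ∀ a b, c.rel a b → a = b :=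
  ⟨fun h _ _ hab => rel_bot_iff.mp (h ▸ hab),
    fun h => le_bot_iff.mp fun a b hab => rel_bot_iff.mpr (h a b hab)⟩

theorem rel_inf_iff {c d : Congruence A} {a b : A.carrier} :
    (c ⊓ d).rel a b ↔ c.rel a b ∧ d.rel a b :=
  ⟨fun h => ⟨(inf_le_left : c ⊓ d ≤ c) a b h, (inf_le_right : c ⊓ d ≤ d) a b h⟩,
    fun h e he => by rcases he with rfl | rfl; exacts [h.1, h.2]⟩

theorem rel_evalTrm (c : Congruence A) {V : Type} (t : Trm σ V) {f g : V → A.carrier}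
    (h : ∀ v, c.rel (f v) (g v)) : c.rel (A.evalTrm f t) (A.evalTrm g t) := by
  induction t with
  | var v => exact h v
  | op F ts ih => exact c.compat F _ _ ih

def comap {B : Alg σ} (h : UAHom A B) (c : Congruence B) : Congruence A where
  rel a b := c.rel (h.toFun a) (h.toFun b)
  iseqv := ⟨fun _ => c.iseqv.refl _, c.iseqv.symm, c.iseqv.trans⟩
  compat f a b hab := by rw [h.map_op, h.map_op]; exact c.compat f _ _ hab

end Congruence

theorem UAHom.map_evalTrm {σ : Sig} {A B : Alg σ} (h : UAHom A B) {V : Type}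
    (asg : V → A.carrier) (t : Trm σ V) :
    h.toFun (A.evalTrm asg t) = B.evalTrm (h.toFun ∘ asg) t := by
  induction t with
  | var v => rfl
  | op f ts ih => exact (h.map_op f _).trans (congrArg (B.interp f) (funext ih))

def Trm.bind {σ : Sig} {V W : Type} (s : V → Trm σ W) : Trm σ V → Trm σ W
  | .var v => s v
  | .op f ts => .op f fun i => (ts i).bind s

theorem Alg.evalTrm_bind {σ : Sig} (A : Alg σ) {V W : Type} (s : V → Trm σ W)
    (asg : W → A.carrier) (t : Trm σ V) :
    A.evalTrm asg (t.bind s) = A.evalTrm (fun v => A.evalTrm asg (s v)) t := by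
  induction t with
  | var v => rfl
  | op f ts ih => exact congrArg (A.interp f) (funext ih)

theorem Alg.evalTrm_bind_update {σ : Sig} (A : Alg σ) {ι V : Type} [DecidableEq ι]
    (g : ι → V) (i : ι) (s : Trm σ V) (asg : V → A.carrier) (t : Trm σ ι) :
    A.evalTrm asg (t.bind (Function.update (fun l => .var (g l)) i s)) =
      A.evalTrm (Function.update (asg ∘ g) i (A.evalTrm asg s)) t := by
  rw [evalTrm_bind]
  exact congrArg (A.evalTrm · t) (Function.comp_update (A.evalTrm asg) _ i s)

theorem Centralizes.apply {σ : Sig} {A : Alg σ} {S T δ : Congruence A}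
    (h : Centralizes S T δ) {X Y : Type} [Finite X] [Finite Y] (t : Trm σ (X ⊕ Y))
    {a b : X → A.carrier} {u v : Y → A.carrier}
    (hab : ∀ i, S.rel (a i) (b i)) (huv : ∀ j, T.rel (u j) (v j))
    (hδ : δ.rel (A.evalTrm (Sum.elim a u) t) (A.evalTrm (Sum.elim a v) t)) :
    δ.rel (A.evalTrm (Sum.elim b u) t) (A.evalTrm (Sum.elim b v) t) := by
  obtain ⟨m, ⟨eX⟩⟩ := Finite.exists_equiv_fin X
  obtain ⟨n, ⟨eY⟩⟩ := Finite.exists_equiv_fin Y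
  have key : ∀ (a : X → A.carrier) (u : Y → A.carrier),
      A.evalTrm (Sum.elim (a ∘ eX.symm) (u ∘ eY.symm))
        (t.bind fun s => .var (Sum.map eX eY s)) = A.evalTrm (Sum.elim a u) t := by
    intro a u
    rw [A.evalTrm_bind]
    congr 1
    funext s
    cases s <;> simp [Alg.evalTrm]
  have := h m n (t.bind fun s => .var (Sum.map eX eY s)) (a ∘ eX.symm) (b ∘ eX.symm)
    (u ∘ eY.symm) (v ∘ eY.symm) (fun i => hab _) (fun j => huv _)
  simpa only [key] using this (by simpa only [key] using hδ)

theorem commC_eq_bot_iff {σ : Sig} {A : Alg σ} {S T : Congruence A} :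
    commC S T = ⊥ ↔ Centralizes S T ⊥ :=
  ⟨fun h => h ▸ fun m n t a b u v hab huv hδ c hc => hc m n t a b u v hab huv (hδ c hc),
    fun h => le_bot_iff.mp (sInf_le h)⟩

theorem Function.induction_update {ι X : Type*} [Finite ι] [DecidableEq ι] {R : X → X → Prop}
    (P : (ι → X) → Prop) (step : ∀ w i y, P w → R (w i) y → P (Function.update w i y))
    {u v : ι → X} (hu : P u) (huv : ∀ i, Relation.ReflTransGen R (u i) (v i)) : P v := by
  have : Fintype ι := Fintype.ofFinite ι
  suffices ∀ s : Finset ι, P fun i => if i ∈ s then v i else u i by simpa using this .univ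
  intro s
  induction s using Finset.induction_on with
  | empty => simpa using hu
  | insert j s hj ih =>
    set w : ι → X := fun i => if i ∈ s then v i else u i
    have hwj : w j = u j := if_neg hj
    have reach : ∀ y, Relation.ReflTransGen R (u j) y → P (Function.update w j y) := by
      intro y hy
      induction hy with
      | refl => rwa [← hwj, Function.update_eq_self]
      | tail _ hyz ih' => simpa using step _ j _ ih' (by simpa using hyz)
    convert reach (v j) (huv j) using 1
    funext i
    by_cases hij : i = j
    · subst hij; simp
    · simp [hij, w]

namespace algOn

variable {σ : Sig} {A : Alg σ} (α : Congruence A)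

/-- The coordinate projections of `A(α)`: `proj α true` is the first, `proj α false` the second. -/
def proj (b : Bool) : UAHom (algOn A α) A where
  toFun p := cond b p.1.1 p.1.2
  map_op f a := by cases b <;> rfl

def swap : UAHom (algOn A α) (algOn A α) where
  toFun p := ⟨(p.1.2, p.1.1), α.iseqv.symm p.2⟩
  map_op _ _ := rfl

def diag (x : A.carrier) : (algOn A α).carrier := ⟨(x, x), α.iseqv.refl x⟩

variable {α}

theorem rel_proj (p : (algOn A α).carrier) (b b' : Bool) :
    α.rel ((proj α b).toFun p) ((proj α b').toFun p) := by
  cases b <;> cases b'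
  exacts [α.iseqv.refl _, α.iseqv.symm p.2, p.2, α.iseqv.refl _]

theorem proj_diag (b : Bool) (x : A.carrier) : (proj α b).toFun (diag α x) = x := by
  cases b <;> rfl

end algOn

open algOn

section DiagDelta

variable {σ : Sig} {A : Alg σ} {α β : Congruence A}

theorem diagDelta_rel_diag {x z : A.carrier} (h : β.rel x z) :
    (diagDelta A α β).rel (diag α x) (diag α z) :=
  fun _ hc => hc x z h

theorem diagDelta_le_comap_swap : diagDelta A α β ≤ (diagDelta A α β).comap (swap α) :=
  sInf_le fun _ _ h => diagDelta_rel_diag h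

theorem diagDelta_le_comap_proj (b : Bool) : diagDelta A α β ≤ β.comap (proj α b) :=
  sInf_le fun _ _ h => by cases b <;> exact h

theorem commC_eq_bot_of_eta1_inf_diagDelta (h : eta1 A α ⊓ diagDelta A α β = ⊥) :
    commC α β = ⊥ := by
  refine commC_eq_bot_iff.mpr fun m n t a b u v hab huv hδ => ?_
  set F : Fin m → (algOn A α).carrier := fun i => ⟨(a i, b i), hab i⟩
  have hΔ : (diagDelta A α β).rel ((algOn A α).evalTrm (Sum.elim F (diag α ∘ u)) t)
      ((algOn A α).evalTrm (Sum.elim F (diag α ∘ v)) t) := by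
    refine Congruence.rel_evalTrm _ t ?_
    rintro (i | j)
    exacts [(diagDelta A α β).iseqv.refl _, diagDelta_rel_diag (huv j)]
  have key (b' : Bool) (w : Fin n → A.carrier) :
      (proj α b').toFun ((algOn A α).evalTrm (Sum.elim F (diag α ∘ w)) t) =
        A.evalTrm (Sum.elim (cond b' a b) w) t := by
    rw [UAHom.map_evalTrm, Sum.comp_elim]
    cases b' <;> simp only [Function.comp_def, proj_diag] <;> rfl
  have heq := Congruence.eq_bot_iff_rel.mp h _ _
    (Congruence.rel_inf_iff.mpr ⟨(key true u).trans ((Congruence.rel_bot_iff.mp hδ).trans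
      (key true v).symm), hΔ⟩)
  exact Congruence.rel_bot_iff.mpr ((key false u).symm.trans ((congrArg _ heq).trans (key false v)))

theorem commC_inf_eq_bot_of_eta2_inf_diagDelta (h : eta2 A α ⊓ diagDelta A α β = ⊥) :
    commC β (α ⊓ β) = ⊥ := by
  refine commC_eq_bot_iff.mpr fun m n t a b u v hab huv hδ => ?_
  replace hδ := Congruence.rel_bot_iff.mp hδ
  set G : Fin n → (algOn A α).carrier :=
    fun j => ⟨(u j, v j), (Congruence.rel_inf_iff.mp (huv j)).1⟩
  have key (b' : Bool) (x : Fin m → A.carrier) :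
      (proj α b').toFun ((algOn A α).evalTrm (Sum.elim (diag α ∘ x) G) t) =
        A.evalTrm (Sum.elim x (cond b' u v)) t := by
    rw [UAHom.map_evalTrm, Sum.comp_elim]
    cases b' <;> simp only [Function.comp_def, proj_diag] <;> rfl
  set p := (algOn A α).evalTrm (Sum.elim (diag α ∘ a) G) t
  set q := (algOn A α).evalTrm (Sum.elim (diag α ∘ b) G) t
  -- `q` is `Δ`-related to the diagonal pair of `t(b,v)` via the diagonal pair `p` of
  -- `t(a,u) = t(a,v)`.
  have hp : p = diag α (A.evalTrm (Sum.elim a v) t) :=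
    Subtype.ext (Prod.ext ((key true a).trans hδ) (key false a))
  have hps : β.rel (A.evalTrm (Sum.elim a v) t) (A.evalTrm (Sum.elim b v) t) :=
    Congruence.rel_evalTrm _ t fun s => s.casesOn hab fun _ => β.iseqv.refl _
  have hpq : (diagDelta A α β).rel p q := by
    refine Congruence.rel_evalTrm _ t ?_
    rintro (i | j)
    exacts [diagDelta_rel_diag (hab i), (diagDelta A α β).iseqv.refl _]
  have hq : (diagDelta A α β).rel q (diag α (A.evalTrm (Sum.elim b v) t)) :=
    (diagDelta A α β).iseqv.trans ((diagDelta A α β).iseqv.symm hpq)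
      (hp ▸ diagDelta_rel_diag hps)
  have hη : (eta2 A α).rel q (diag α (A.evalTrm (Sum.elim b v) t)) := key false b
  have heq := Congruence.eq_bot_iff_rel.mp h _ _ (Congruence.rel_inf_iff.mpr ⟨hη, hq⟩)
  exact Congruence.rel_bot_iff.mpr ((key true b).symm.trans (congrArg (·.1.1) heq))

end DiagDelta

section DiagStep

variable {σ : Sig} {A : Alg σ} (α β : Congruence A)

/-- One step `(t(x̄, c̄), t(z̄, c̄))` with `x̄ β z̄` placed on the diagonal and constants `c̄` from
`A(α)`; `Δ_{α,β}` is the transitive closure of these steps. -/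
def DiagStep (u v : (algOn A α).carrier) : Prop :=
  ∃ (X Y : Type) (_ : Finite X) (_ : Finite Y) (t : Trm σ (X ⊕ Y)) (x z : X → A.carrier)
    (c : Y → (algOn A α).carrier), (∀ i, β.rel (x i) (z i)) ∧
    u = (algOn A α).evalTrm (Sum.elim (diag α ∘ x) c) t ∧
    v = (algOn A α).evalTrm (Sum.elim (diag α ∘ z) c) t

variable {α β}

theorem DiagStep.symm {u v : (algOn A α).carrier} (h : DiagStep α β u v) : DiagStep α β v u :=
  let ⟨X, Y, hX, hY, t, x, z, c, hxz, hu, hv⟩ := h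
  ⟨X, Y, hX, hY, t, z, x, c, fun i => β.iseqv.symm (hxz i), hv, hu⟩

theorem DiagStep.interp_update (f : σ.ops) (g : Fin (σ.arity f) → (algOn A α).carrier)
    (j : Fin (σ.arity f)) {u v : (algOn A α).carrier} (h : DiagStep α β u v) :
    DiagStep α β ((algOn A α).interp f (Function.update g j u))
      ((algOn A α).interp f (Function.update g j v)) := by
  obtain ⟨X, Y, _, _, t, x, z, c, hxz, rfl, rfl⟩ := h
  have key (x : X → A.carrier) :
      (algOn A α).interp f
          (Function.update g j ((algOn A α).evalTrm (Sum.elim (diag α ∘ x) c) t)) =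
        (algOn A α).evalTrm (Sum.elim (diag α ∘ x) (Sum.elim c g))
          ((Trm.op f .var).bind (Function.update (fun i => .var (.inr (.inr i))) j
            (t.bind fun s => .var (Sum.map id .inl s)))) := by
    rw [Alg.evalTrm_bind_update, Alg.evalTrm_bind]
    congr 3
    funext s
    cases s <;> rfl
  exact ⟨X, Y ⊕ _, inferInstance, inferInstance, _, x, z, _, hxz, key x, key z⟩

def diagChain (α β : Congruence A) : Congruence (algOn A α) where
  rel := Relation.ReflTransGen (DiagStep α β)
  iseqv := ⟨fun _ => .refl, fun h => by
      induction h with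
      | refl => exact .refl
      | tail _ h ih => exact .head h.symm ih,
    .trans⟩
  compat f a b hab := Function.induction_update
    (fun w => Relation.ReflTransGen (DiagStep α β) ((algOn A α).interp f a)
      ((algOn A α).interp f w))
    (fun w j y hw hy => hw.tail <| by simpa using DiagStep.interp_update f w j hy) .refl hab

theorem diagDelta_le_diagChain : diagDelta A α β ≤ diagChain α β :=
  sInf_le fun x z h => .single ⟨Unit, Empty, inferInstance, inferInstance, .var (.inl ()),
    fun _ => x, fun _ => z, Empty.elim, fun _ => h, rfl, rfl⟩

end DiagStep

section Taylor

variable {σ : Sig} {A : Alg σ} {n : ℕ}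

def IsTaylorTrmOn (A : Alg σ) (T : Trm σ (Fin n)) : Prop :=
  (∀ c : A.carrier, A.evalTrm (fun _ => c) T = c) ∧
  ∀ i : Fin n, ∃ w z : Fin n → Bool, w i ≠ z i ∧ ∀ x y : A.carrier,
    A.evalTrm (fun j => cond (w j) x y) T = A.evalTrm (fun j => cond (z j) x y) T

theorem IsTaylorTrm.isTaylorTrmOn {V : Variety σ} {T : Trm σ (Fin n)} (hT : IsTaylorTrm V T)
    (hA : V.Mem A) : IsTaylorTrmOn A T :=
  ⟨hT.2.1 A hA, fun i => (hT.2.2 i).imp fun _ => Exists.imp fun _ h => ⟨h.1, h.2 A hA⟩⟩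

theorem IsTaylorTrmOn.exists_identity {T : Trm σ (Fin n)} (hT : IsTaylorTrmOn A T) (i : Fin n) :
    ∃ W Z : Fin n → Bool, W i = true ∧ Z i = false ∧ ∀ x y : A.carrier,
      A.evalTrm (fun j => cond (W j) x y) T = A.evalTrm (fun j => cond (Z j) x y) T := by
  obtain ⟨w, z, hne, hwz⟩ := hT.2 i
  cases hw : w i
  · exact ⟨z, w, by cases hz : z i <;> simp_all, hw, fun x y => (hwz x y).symm⟩
  · exact ⟨w, z, hw, by cases hz : z i <;> simp_all, hwz⟩

variable {α β : Congruence A}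

theorem evalTrm_proj_update_of_diagStep (H : Centralizes β α ⊥) (T : Trm σ (Fin n))
    (W Z : Fin n → Bool) {w : Fin n → (algOn A α).carrier}
    (hw : A.evalTrm (fun l => (proj α (W l)).toFun (w l)) T =
      A.evalTrm (fun l => (proj α (Z l)).toFun (w l)) T)
    {i : Fin n} {y : (algOn A α).carrier} (hy : DiagStep α β (w i) y) :
    A.evalTrm (fun l => (proj α (W l)).toFun (Function.update w i y l)) T =
      A.evalTrm (fun l => (proj α (Z l)).toFun (Function.update w i y l)) T := by
  obtain ⟨X, Y, _, _, t, x, z, c, hxz, hx, rfl⟩ := hy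
  -- `s` is `T` with the step term `t` plugged in at place `i`; its remaining places and the
  -- constants of `t` become the `α`-columns, `x β z` the rows.
  let s : Trm σ (X ⊕ (Y ⊕ Fin n)) := T.bind (Function.update (fun l => .var (.inr (.inr l))) i
    (t.bind fun s => .var (Sum.map id .inl s)))
  let cols (V : Fin n → Bool) : Y ⊕ Fin n → A.carrier :=
    Sum.elim (fun r => (proj α (V i)).toFun (c r)) fun l => (proj α (V l)).toFun (w l)
  have key (V : Fin n → Bool) (xx : X → A.carrier) :
      A.evalTrm (Sum.elim xx (cols V)) s = A.evalTrm (fun l => (proj α (V l)).toFun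
        (Function.update w i ((algOn A α).evalTrm (Sum.elim (diag α ∘ xx) c) t) l)) T := by
    rw [Alg.evalTrm_bind_update, Alg.evalTrm_bind]
    congr 1
    funext l
    rw [Function.apply_update (fun l => (proj α (V l)).toFun), UAHom.map_evalTrm]
    congr 2
    funext s
    cases s with
    | inl => exact (proj_diag _ _).symm
    | inr => rfl
  have hcols : ∀ j, α.rel (cols W j) (cols Z j) := by
    rintro (r | l)
    exacts [rel_proj (c r) _ _, rel_proj (w l) _ _]
  have := H.apply s hxz hcols <| Congruence.rel_bot_iff.mpr <| by
    rwa [key, key, ← hx, Function.update_eq_self]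
  rwa [Congruence.rel_bot_iff, key, key] at this

theorem evalTrm_proj_eq_of_diagChain (H : Centralizes β α ⊥) (T : Trm σ (Fin n))
    (W Z : Fin n → Bool) (hWZ : ∀ x y : A.carrier,
      A.evalTrm (fun j => cond (W j) x y) T = A.evalTrm (fun j => cond (Z j) x y) T)
    {u : (algOn A α).carrier} {w : Fin n → (algOn A α).carrier}
    (hw : ∀ l, (diagChain α β).rel u (w l)) :
    A.evalTrm (fun l => (proj α (W l)).toFun (w l)) T =
      A.evalTrm (fun l => (proj α (Z l)).toFun (w l)) T :=
  Function.induction_update (u := fun _ => u)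
    (fun w => A.evalTrm (fun l => (proj α (W l)).toFun (w l)) T =
      A.evalTrm (fun l => (proj α (Z l)).toFun (w l)) T)
    (fun _ _ _ hw hy => evalTrm_proj_update_of_diagStep H T W Z hw hy) (hWZ u.1.1 u.1.2) hw

theorem evalTrm_update_eq_of_diagChain (H1 : Centralizes β α ⊥) (H2 : Centralizes α (α ⊓ β) ⊥)
    {T : Trm σ (Fin n)} (hT : IsTaylorTrmOn A T) {u v : (algOn A α).carrier}
    (huv : (diagChain α β).rel u v) (hβ : β.rel u.1.2 v.1.2) (hfst : u.1.1 = v.1.1)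
    (i : Fin n) {b : Fin n → A.carrier} (hb : ∀ l, α.rel u.1.2 (b l)) :
    A.evalTrm (Function.update b i u.1.2) T = A.evalTrm (Function.update b i v.1.2) T := by
  obtain ⟨W, Z, hW, hZ, hWZ⟩ := hT.exists_identity i
  set r : Fin n → A.carrier := fun l => (proj α (Z l)).toFun u
  have hw : ∀ l, (diagChain α β).rel u (Function.update (fun _ => u) i v l) := by
    intro l
    rcases eq_or_ne l i with rfl | hl
    · simpa using huv
    · simpa [hl] using (diagChain α β).iseqv.refl u
  -- `W` reads place `i` from the first coordinates, where `u` and `v` agree.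
  have hr : A.evalTrm (Function.update r i u.1.2) T = A.evalTrm (Function.update r i v.1.2) T :=
    calc A.evalTrm (Function.update r i u.1.2) T
        = A.evalTrm (fun l => (proj α (W l)).toFun u) T := by
          rw [evalTrm_proj_eq_of_diagChain H1 T W Z hWZ fun _ => (diagChain α β).iseqv.refl u]
          congr 1
          funext l
          rcases eq_or_ne l i with rfl | hl
          · simp [r, hZ, proj]
          · simp [hl, r]
      _ = A.evalTrm (fun l => (proj α (W l)).toFun (Function.update (fun _ => u) i v l)) T := by
          congr 1
          funext l
          rcases eq_or_ne l i with rfl | hl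
          · simp [hW, hfst, proj]
          · simp [hl]
      _ = A.evalTrm (fun l => (proj α (Z l)).toFun (Function.update (fun _ => u) i v l)) T :=
          evalTrm_proj_eq_of_diagChain H1 T W Z hWZ hw
      _ = A.evalTrm (Function.update r i v.1.2) T := by
          congr 1
          funext l
          rcases eq_or_ne l i with rfl | hl
          · simp [hZ, proj]
          · simp [hl, r]
  have hrows : ∀ l, α.rel (r l) (b l) := fun l => α.iseqv.trans (rel_proj u _ false) (hb l)
  have hcol : (α ⊓ β).rel u.1.2 v.1.2 :=
    Congruence.rel_inf_iff.mpr ⟨α.iseqv.trans (α.iseqv.symm u.2) (hfst ▸ v.2), hβ⟩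
  have := H2.apply (T.bind (Function.update (fun l => .var (.inl l)) i (.var (.inr ()))))
    (u := fun _ : Unit => u.1.2) (v := fun _ => v.1.2) hrows (fun _ => hcol)
    (by rw [Congruence.rel_bot_iff, Alg.evalTrm_bind_update, Alg.evalTrm_bind_update]; exact hr)
  rwa [Congruence.rel_bot_iff, Alg.evalTrm_bind_update, Alg.evalTrm_bind_update] at this

theorem eq_of_diagDelta_of_fst_eq (H1 : Centralizes β α ⊥) (H2 : Centralizes α (α ⊓ β) ⊥)
    {T : Trm σ (Fin n)} (hT : IsTaylorTrmOn A T) {u v : (algOn A α).carrier}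
    (h : (diagDelta A α β).rel u v) (hfst : u.1.1 = v.1.1) : u = v := by
  have hβ : β.rel u.1.2 v.1.2 := diagDelta_le_comap_proj false u v h
  have hα : α.rel u.1.2 v.1.2 := α.iseqv.trans (α.iseqv.symm u.2) (hfst ▸ v.2)
  -- Change the places of `T(u₂, …, u₂)` from `u₂` to `v₂` one at a time.
  have hwalk : A.evalTrm (fun _ => v.1.2) T = A.evalTrm (fun _ => u.1.2) T :=
    (Function.induction_update (R := fun p q => p = u.1.2 ∧ q = v.1.2)
      (fun b => (∀ l, α.rel u.1.2 (b l)) ∧ A.evalTrm b T = A.evalTrm (fun _ => u.1.2) T)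
      (fun b i y ⟨hb, hbT⟩ ⟨hbi, hy⟩ => by
        subst hy
        refine ⟨fun l => ?_, ?_⟩
        · rcases eq_or_ne l i with rfl | hl
          · simpa using hα
          · simpa [hl] using hb l
        · rw [← evalTrm_update_eq_of_diagChain H1 H2 hT (diagDelta_le_diagChain u v h) hβ hfst
            i hb, ← hbT, ← hbi, Function.update_eq_self])
      ⟨fun _ => α.iseqv.refl _, rfl⟩ fun _ => .single ⟨rfl, rfl⟩).2
  exact Subtype.ext (Prod.ext hfst (by rw [← hT.1 u.1.2, ← hT.1 v.1.2, hwalk]))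

theorem eta1_inf_diagDelta_eq_bot (H1 : Centralizes β α ⊥) (H2 : Centralizes α (α ⊓ β) ⊥)
    {T : Trm σ (Fin n)} (hT : IsTaylorTrmOn A T) : eta1 A α ⊓ diagDelta A α β = ⊥ :=
  Congruence.eq_bot_iff_rel.mpr fun _ _ h =>
    eq_of_diagDelta_of_fst_eq H1 H2 hT (Congruence.rel_inf_iff.mp h).2
      (Congruence.rel_inf_iff.mp h).1

theorem eta2_inf_diagDelta_eq_bot (H1 : Centralizes β α ⊥) (H2 : Centralizes α (α ⊓ β) ⊥)
    {T : Trm σ (Fin n)} (hT : IsTaylorTrmOn A T) : eta2 A α ⊓ diagDelta A α β = ⊥ :=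
  Congruence.eq_bot_iff_rel.mpr fun u v h =>
    congrArg (swap α).toFun <| eq_of_diagDelta_of_fst_eq H1 H2 hT
      (diagDelta_le_comap_swap u v (Congruence.rel_inf_iff.mp h).2) (Congruence.rel_inf_iff.mp h).1

end Taylor

/-- If a variety `V` has a Taylor term, then for `A ∈ V` and congruences
`α, β` the four listed conditions are equivalent; in particular `V` satisfies
the quasi-identity `[β,α] = 0 & [α,α∩β] = 0 ⟹ [α,β] = 0`. -/
theorem refinement {σ : Sig} (V : Variety σ) (hT : HasTaylorTrm V)
    (A : Alg σ) (hA : V.Mem A) (α β : Congruence A) :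
    List.TFAE [
      -- (a)
      commC β α = ⊥ ∧ commC α (α ⊓ β) = ⊥,
      -- (b) Δ_{α,β} is disjoint from the projection kernels of A(α)
      eta1 A α ⊓ diagDelta A α β = ⊥ ∧ eta2 A α ⊓ diagDelta A α β = ⊥,
      -- (c)
      commC α β = ⊥ ∧ commC β (α ⊓ β) = ⊥,
      -- (d) Δ_{β,α} is disjoint from the projection kernels of A(β)
      eta1 A β ⊓ diagDelta A β α = ⊥ ∧ eta2 A β ⊓ diagDelta A β α = ⊥ ]
    ∧ ((commC β α = ⊥ ∧ commC α (α ⊓ β) = ⊥) → commC α β = ⊥) := by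
  obtain ⟨n, T, hTaylor⟩ := hT
  have hTA := hTaylor.isTaylorTrmOn hA
  have a_to_b {α β : Congruence A} (h : commC β α = ⊥ ∧ commC α (α ⊓ β) = ⊥) :
      eta1 A α ⊓ diagDelta A α β = ⊥ ∧ eta2 A α ⊓ diagDelta A α β = ⊥ :=
    have H1 := commC_eq_bot_iff.mp h.1
    have H2 := commC_eq_bot_iff.mp h.2
    ⟨eta1_inf_diagDelta_eq_bot H1 H2 hTA, eta2_inf_diagDelta_eq_bot H1 H2 hTA⟩
  have b_to_c {α β : Congruence A}
      (h : eta1 A α ⊓ diagDelta A α β = ⊥ ∧ eta2 A α ⊓ diagDelta A α β = ⊥) :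
      commC α β = ⊥ ∧ commC β (α ⊓ β) = ⊥ :=
    ⟨commC_eq_bot_of_eta1_inf_diagDelta h.1, commC_inf_eq_bot_of_eta2_inf_diagDelta h.2⟩
  refine ⟨?_, fun h => (b_to_c (a_to_b h)).1⟩
  tfae_have 1 → 2 := a_to_b
  tfae_have 2 → 3 := b_to_c
  tfae_have 3 → 4 := fun h => a_to_b ⟨h.1, inf_comm α β ▸ h.2⟩
  tfae_have 4 → 1 := fun h => ⟨(b_to_c h).1, inf_comm β α ▸ (b_to_c h).2⟩
  tfae_finish
end
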